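/- arXiv:2512.24291 — 7 statements merged into one kernel-verified Lean document; each statement's English description precedes it below -/
import Mathlib

section
/- Let h : ℝ^d → ℝ be differentiable with L_h-Lipschitz gradient, satisfying the μ_h-PŁ condition (μ_h > 0) with attained infimum h*. Let {x^k} be the AC-GM iterates with scale parameter α > 1 and initial Lipschitz factor L_0 > 0, and assume ∇h(x^k) ≠ 0 for every k so that all iterates are well defined. Set β := (α+1)/2, m_h := ⌈log_β(max{L_0, L_h}/L_0)⌉₊ (the smallest nonnegative integer at least this logarithm), p := μ_h(α−1)/(2α² max{L_0, L_h}), C̄ := max{ L_h³/(μ_h α² L_0²), L_h²/(μ_h α² L_0), μ_h L_h/(α² L_0²), μ_h/(α² L_0) }, and C_h := (1+C̄)^{m_h}/(1−p)^{m_h}. Then 0 < p < 1 and for every k ≥ 0, h(x^{k+1}) − h* ≤ C_h (1−p)^{k+1} (h(x^0) − h*). -/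
/-!
With step `t = 1/(αγ)`, the definition of the secant curvature `L⁺` gives the exact identity
`h(x⁺) = h(x) - t‖∇h(x)‖² + (L⁺/2) t²‖∇h(x)‖²`, and the descent lemma gives `L⁺ ≤ L_h`, so the
running maximum `γ` never exceeds `max{L₀, L_h}`. If `L⁺ ≤ βγ`, the identity and the PŁ
inequality contract the gap `h - h*` by `1 - p`. Otherwise the next `γ` is more than `β` times the
current one; since `γ` starts at `L₀`, this happens at most `m_h` times, and each time the gap grows
by at most `1 + L_h²/(α²L₀²) ≤ 1 + C̄`, because `‖∇h‖² ≤ 2 L_h (h - h*)`.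
-/

open Finset Real
open scoped RealInnerProductSpace

section Smooth

variable {F : Type*} [NormedAddCommGroup F] [InnerProductSpace ℝ F] [CompleteSpace F]
  {h : F → ℝ} {K : ℝ}

theorem image_le_add_inner_add_of_lipschitz_gradient (hdiff : Differentiable ℝ h)
    (hLip : ∀ u v, ‖gradient h u - gradient h v‖ ≤ K * ‖u - v‖) (u v : F) :
    h v ≤ h u + ⟪gradient h u, v - u⟫ + K / 2 * ‖v - u‖ ^ 2 := by
  set w := v - u
  let φ : ℝ → ℝ := fun t => h (u + t • w) - t * ⟪gradient h u, w⟫ - K / 2 * t ^ 2 * ‖w‖ ^ 2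
  have hφ : ∀ t, HasDerivAt φ
      (⟪gradient h (u + t • w), w⟫ - ⟪gradient h u, w⟫ - K * t * ‖w‖ ^ 2) t := by
    intro t
    have hpath : HasDerivAt (fun s : ℝ => u + s • w) w t := by
      simpa using ((hasDerivAt_id t).smul_const w).const_add u
    have hh : HasDerivAt (fun s : ℝ => h (u + s • w)) ⟪gradient h (u + t • w), w⟫ t :=
      ((hdiff (u + t • w)).hasGradientAt.hasFDerivAt.comp_hasDerivAt t hpath :)
    have := (hh.sub ((hasDerivAt_id t).mul_const ⟪gradient h u, w⟫)).sub
      (((hasDerivAt_pow 2 t).const_mul (K / 2)).mul_const (‖w‖ ^ 2))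
    exact this.congr_deriv (by simp only [one_mul, Nat.cast_ofNat]; ring)
  have hanti : AntitoneOn φ (Set.Ici 0) := by
    refine antitoneOn_of_hasDerivWithinAt_nonpos (convex_Ici 0)
      (HasDerivAt.continuousOn fun t _ => hφ t) (fun t _ => (hφ t).hasDerivWithinAt) ?_
    intro t ht
    rw [interior_Ici, Set.mem_Ioi] at ht
    have hdiff_le : ⟪gradient h (u + t • w) - gradient h u, w⟫ ≤ K * t * ‖w‖ ^ 2 := calc
      _ ≤ ‖gradient h (u + t • w) - gradient h u‖ * ‖w‖ := real_inner_le_norm _ _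
      _ ≤ K * ‖t • w‖ * ‖w‖ := by
          gcongr
          simpa using hLip (u + t • w) u
      _ = K * t * ‖w‖ ^ 2 := by rw [norm_smul, norm_of_nonneg ht.le]; ring
    rw [inner_sub_left] at hdiff_le
    linarith
  have h01 := hanti Set.self_mem_Ici (Set.mem_Ici.2 zero_le_one) zero_le_one
  simp only [φ, w, one_smul, zero_smul, add_zero, add_sub_cancel] at h01
  linarith

theorem pos_of_lipschitz_gradient_of_forall_le
    (hLip : ∀ u v, ‖gradient h u - gradient h v‖ ≤ K * ‖u - v‖) {xs y : F}
    (hmin : ∀ z, h xs ≤ h z) (hy : gradient h y ≠ 0) : 0 < K := by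
  have hxs : gradient h xs = 0 := by
    have hloc : IsLocalMin h xs := Filter.Eventually.of_forall hmin
    rw [gradient, hloc.fderiv_eq_zero, map_zero]
  have hK := hLip y xs
  rw [hxs, sub_zero] at hK
  exact pos_of_mul_pos_left ((norm_pos_iff.2 hy).trans_le hK) (norm_nonneg _)

theorem sq_norm_gradient_le (hdiff : Differentiable ℝ h)
    (hLip : ∀ u v, ‖gradient h u - gradient h v‖ ≤ K * ‖u - v‖) (hK : 0 < K) {m : ℝ}
    (hlow : ∀ y, m ≤ h y) (u : F) :
    ‖gradient h u‖ ^ 2 ≤ 2 * K * (h u - m) := by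
  have hd := image_le_add_inner_add_of_lipschitz_gradient hdiff hLip u (u - K⁻¹ • gradient h u)
  rw [sub_sub_cancel_left, inner_neg_right, real_inner_smul_right, real_inner_self_eq_norm_sq,
    norm_neg, norm_smul, norm_inv, norm_of_nonneg hK.le] at hd
  have hlo := hlow (u - K⁻¹ • gradient h u)
  have hsq : K / 2 * (K⁻¹ * ‖gradient h u‖) ^ 2 = ‖gradient h u‖ ^ 2 / (2 * K) := by field_simp
  have hinv : K⁻¹ * ‖gradient h u‖ ^ 2 = 2 * (‖gradient h u‖ ^ 2 / (2 * K)) := by field_simp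
  have : ‖gradient h u‖ ^ 2 / (2 * K) ≤ h u - m := by linarith
  rwa [div_le_iff₀ (by positivity), mul_comm] at this

theorem le_of_pl_of_lipschitz_gradient (hdiff : Differentiable ℝ h)
    (hLip : ∀ u v, ‖gradient h u - gradient h v‖ ≤ K * ‖u - v‖) (hK : 0 < K) {μ m : ℝ}
    (hlow : ∀ y, m ≤ h y) (hPL : ∀ y, 2 * μ * (h y - m) ≤ ‖gradient h y‖ ^ 2) {y : F}
    (hy : gradient h y ≠ 0) : μ ≤ K := by
  have hG := pow_pos (norm_pos_iff.2 hy) 2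
  have hup := sq_norm_gradient_le hdiff hLip hK hlow y
  have hgap : 0 < h y - m := pos_of_mul_pos_right (hG.trans_le hup) (by positivity)
  nlinarith [hPL y]

noncomputable def secantCurvature (h : F → ℝ) (x y : F) : ℝ :=
  2 * (h y - h x - ⟪gradient h x, y - x⟫) / ‖y - x‖ ^ 2

theorem secantCurvature_le (hdiff : Differentiable ℝ h)
    (hLip : ∀ u v, ‖gradient h u - gradient h v‖ ≤ K * ‖u - v‖) {x y : F} (hxy : y ≠ x) :
    secantCurvature h x y ≤ K := by
  rw [secantCurvature, div_le_iff₀ (pow_pos (norm_pos_iff.2 (sub_ne_zero.2 hxy)) 2)]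
  linarith [image_le_add_inner_add_of_lipschitz_gradient hdiff hLip x y]

theorem image_sub_smul_gradient {x y : F} {t c : ℝ} (hy : y = x - t • gradient h x) (ht : t ≠ 0)
    (hg : gradient h x ≠ 0) (hc : c = secantCurvature h x y) :
    h y = h x - t * ‖gradient h x‖ ^ 2 + c / 2 * (t ^ 2 * ‖gradient h x‖ ^ 2) := by
  have hpos : 0 < t ^ 2 * ‖gradient h x‖ ^ 2 := by positivity
  subst hy hc
  rw [secantCurvature, sub_sub_cancel_left, inner_neg_right, real_inner_smul_right,
    real_inner_self_eq_norm_sq, norm_neg, norm_smul, mul_pow, norm_eq_abs, sq_abs]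
  field_simp
  ring

end Smooth

theorem gap_step_le_contraction {α γ Λ c μ G e : ℝ} (hα : 1 < α) (hγ : 0 < γ) (hγΛ : γ ≤ Λ)
    (hc : c ≤ (α + 1) / 2 * γ) (hμ : 0 ≤ μ) (he : 0 ≤ e) (hG : 2 * μ * e ≤ G) :
    e - 1 / (α * γ) * G + c / 2 * ((1 / (α * γ)) ^ 2 * G) ≤
      (1 - μ * (α - 1) / (2 * α ^ 2 * Λ)) * e := by
  have hΛ : 0 < Λ := hγ.trans_le hγΛ
  have hG0 : 0 ≤ G := (by positivity : 0 ≤ 2 * μ * e).trans hG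
  have hα3 : 0 ≤ (3 * α - 1) / (4 * α ^ 2) := div_nonneg (by linarith) (by positivity)
  calc e - 1 / (α * γ) * G + c / 2 * ((1 / (α * γ)) ^ 2 * G)
      ≤ e - 1 / (α * γ) * G + (α + 1) / 2 * γ / 2 * ((1 / (α * γ)) ^ 2 * G) := by gcongr
    _ = e - (3 * α - 1) / (4 * α ^ 2) * (G / γ) := by field_simp; ring
    _ ≤ e - (3 * α - 1) / (4 * α ^ 2) * (G / Λ) := by gcongr
    _ ≤ e - (3 * α - 1) / (4 * α ^ 2) * (2 * μ * e / Λ) := by gcongr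
    _ ≤ (1 - μ * (α - 1) / (2 * α ^ 2 * Λ)) * e := by
        have : 0 ≤ μ * e / (α * Λ) := by positivity
        have key : (3 * α - 1) / (4 * α ^ 2) * (2 * μ * e / Λ) =
            μ * (α - 1) / (2 * α ^ 2 * Λ) * e + μ * e / (α * Λ) := by
          field_simp; ring
        rw [key]; linarith

theorem gap_step_le_expansion {α γ L₀ c Lh G e K : ℝ} (hα : 0 < α) (hL₀ : 0 < L₀)
    (hγ : L₀ ≤ γ) (hc : c ≤ Lh) (hLh : 0 ≤ Lh) (hG0 : 0 ≤ G) (hG : G ≤ 2 * Lh * e)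
    (hK : Lh ^ 2 / (α ^ 2 * L₀ ^ 2) ≤ K) (he : 0 ≤ e) :
    e - 1 / (α * γ) * G + c / 2 * ((1 / (α * γ)) ^ 2 * G) ≤ (1 + K) * e := by
  have hγ0 : 0 < γ := hL₀.trans_le hγ
  calc e - 1 / (α * γ) * G + c / 2 * ((1 / (α * γ)) ^ 2 * G)
      ≤ e + Lh / 2 * ((1 / (α * L₀)) ^ 2 * (2 * Lh * e)) := by
        have : 0 ≤ 1 / (α * γ) * G := by positivity
        have : c / 2 * ((1 / (α * γ)) ^ 2 * G) ≤ Lh / 2 * ((1 / (α * L₀)) ^ 2 * (2 * Lh * e)) := by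
          gcongr
        linarith
    _ = e + Lh ^ 2 / (α ^ 2 * L₀ ^ 2) * e := by field_simp
    _ ≤ (1 + K) * e := by nlinarith

theorem rate_pos_and_lt_one {μ α Λ : ℝ} (hμ : 0 < μ) (hμΛ : μ ≤ Λ) (hα : 1 < α) :
    0 < μ * (α - 1) / (2 * α ^ 2 * Λ) ∧ μ * (α - 1) / (2 * α ^ 2 * Λ) < 1 := by
  have hΛ : 0 < Λ := hμ.trans_le hμΛ
  refine ⟨div_pos (mul_pos hμ (by linarith)) (by positivity), ?_⟩
  rw [div_lt_one (by positivity)]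
  calc μ * (α - 1) ≤ Λ * (α - 1) := by gcongr
    _ < Λ * (2 * α ^ 2) := by gcongr; nlinarith
    _ = 2 * α ^ 2 * Λ := by ring

theorem sq_div_le_cube_div {μ K a : ℝ} (hμ : 0 < μ) (hμK : μ ≤ K) (ha : 0 ≤ a) :
    K ^ 2 / a ≤ K ^ 3 / (μ * a) := by
  calc K ^ 2 / a ≤ K / μ * (K ^ 2 / a) :=
        le_mul_of_one_le_left (by positivity) ((one_le_div hμ).2 hμK)
    _ = K ^ 3 / (μ * a) := by rw [div_mul_div_comm]; ring

theorem mul_pow_card_filter_le {g : ℕ → ℝ} {β : ℝ} (P : ℕ → Prop) [DecidablePred P]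
    (hβ : 0 ≤ β) (hmono : ∀ k, g k ≤ g (k + 1)) (hP : ∀ k, P k → β * g k ≤ g (k + 1)) (k : ℕ) :
    g 0 * β ^ #{i ∈ range k | P i} ≤ g k := by
  induction k with
  | zero => simp
  | succ k ih =>
    rw [range_add_one, filter_insert]
    split_ifs with hk
    · rw [card_insert_of_notMem (by simp), pow_succ, ← mul_assoc]
      calc _ ≤ g k * β := by gcongr
        _ ≤ g (k + 1) := by linarith [hP k hk]
    · exact ih.trans (hmono k)

theorem le_ceil_logb_of_mul_pow_le {a β Λ : ℝ} {n : ℕ} (ha : 0 < a) (hβ : 1 < β)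
    (h : a * β ^ n ≤ Λ) : n ≤ ⌈logb β (Λ / a)⌉₊ := by
  have hΛ : 0 < Λ / a := div_pos ((by positivity : 0 < a * β ^ n).trans_le h) ha
  have : (n : ℝ) ≤ logb β (Λ / a) := by
    rw [le_logb_iff_rpow_le hβ hΛ, rpow_natCast, le_div_iff₀ ha, mul_comm]
    exact h
  exact_mod_cast this.trans (Nat.le_ceil _)

def IsRunningMax (L γ : ℕ → ℝ) : Prop :=
  ∀ k : ℕ, γ (k + 1) = (range (k + 1)).sup' (nonempty_range_iff.mpr (Nat.succ_ne_zero k)) L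

namespace IsRunningMax

variable {L γ : ℕ → ℝ}

theorem le (hγ : IsRunningMax L γ) {i k : ℕ} (hik : i ≤ k) : L i ≤ γ (k + 1) := by
  rw [hγ k]
  exact le_sup' L (mem_range.2 (Nat.lt_succ_of_le hik))

theorem le_of_forall_le (hγ : IsRunningMax L γ) {Λ : ℝ} (hL : ∀ i, L i ≤ Λ) (k : ℕ) :
    γ (k + 1) ≤ Λ := by
  rw [hγ k]
  exact sup'_le _ _ fun i _ => hL i

theorem le_succ (hγ : IsRunningMax L γ) (k : ℕ) : γ (k + 1) ≤ γ (k + 2) := by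
  rw [hγ k]
  exact sup'_le _ _ fun i hi => hγ.le (Nat.le_succ_of_le (Nat.lt_succ_iff.1 (mem_range.1 hi)))

theorem card_filter_le_ceil_logb (hγ : IsRunningMax L γ) {β L₀ Λ : ℝ} (hβ : 1 < β) (hL₀ : 0 < L₀)
    (hL0 : L 0 = L₀) (hΛ : ∀ k, γ (k + 1) ≤ Λ) (k : ℕ) :
    #{i ∈ range k | β * γ (i + 1) < L (i + 1)} ≤ ⌈logb β (Λ / L₀)⌉₊ := by
  refine le_ceil_logb_of_mul_pow_le hL₀ hβ ?_
  calc L₀ * β ^ #{i ∈ range k | β * γ (i + 1) < L (i + 1)}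
      ≤ γ 1 * β ^ #{i ∈ range k | β * γ (i + 1) < L (i + 1)} := by
        gcongr; exact hL0 ▸ hγ.le le_rfl
    _ ≤ γ (k + 1) := mul_pow_card_filter_le (g := fun k => γ (k + 1)) _ (by linarith) hγ.le_succ
        (fun k hk => hk.le.trans (hγ.le le_rfl)) k
    _ ≤ Λ := hΛ k

end IsRunningMax

theorem le_div_pow_card_filter_mul_pow_mul {e : ℕ → ℝ} {q c : ℝ} (P : ℕ → Prop)
    [DecidablePred P] (hq : 0 < q) (hc : 0 ≤ c) (hgood : ∀ k, ¬P k → e (k + 1) ≤ q * e k)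
    (hbad : ∀ k, P k → e (k + 1) ≤ c * e k) (k : ℕ) :
    e k ≤ (c / q) ^ #{i ∈ range k | P i} * q ^ k * e 0 := by
  induction k with
  | zero => simp
  | succ k ih =>
    rw [range_add_one, filter_insert]
    split_ifs with hk
    · rw [card_insert_of_notMem (by simp)]
      calc e (k + 1) ≤ c * e k := hbad k hk
        _ ≤ c * ((c / q) ^ #{i ∈ range k | P i} * q ^ k * e 0) := by gcongr
        _ = _ := by rw [pow_succ, pow_succ]; field_simp
    · calc e (k + 1) ≤ q * e k := hgood k hk
        _ ≤ q * ((c / q) ^ #{i ∈ range k | P i} * q ^ k * e 0) := by gcongr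
        _ = _ := by ring

theorem le_div_pow_mul_pow_mul_of_card_filter_le {e : ℕ → ℝ} {q c : ℝ} {m : ℕ} (P : ℕ → Prop)
    [DecidablePred P] (hq : 0 < q) (hqc : q ≤ c) (he : 0 ≤ e 0)
    (hgood : ∀ k, ¬P k → e (k + 1) ≤ q * e k) (hbad : ∀ k, P k → e (k + 1) ≤ c * e k)
    (hm : ∀ k, #{i ∈ range k | P i} ≤ m) (k : ℕ) :
    e k ≤ (c / q) ^ m * q ^ k * e 0 :=
  (le_div_pow_card_filter_mul_pow_mul P hq (hq.le.trans hqc) hgood hbad k).trans <| by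
    gcongr
    · exact (one_le_div hq).2 hqc
    · exact hm k

/-- AC-GM linear convergence under the PŁ condition.
Let `h : ℝ^d → ℝ` be differentiable with `Lh`-Lipschitz gradient, `μh`-PŁ with attained
infimum `hstar`.  Let `x` be the AC-GM iterates with scale `α > 1` and initial Lipschitz
factor `L₀ > 0`, with nonzero gradients.  Then `0 < p < 1` and
`h (x (k+1)) - hstar ≤ C_h (1-p)^(k+1) (h (x 0) - hstar)` for all `k`. -/
theorem acgm_linear_rate
    {d : ℕ} (h : EuclideanSpace ℝ (Fin d) → ℝ) (hdiff : Differentiable ℝ h)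
    (Lh μh : ℝ) (hμ : 0 < μh)
    (hLip : ∀ u v, ‖gradient h u - gradient h v‖ ≤ Lh * ‖u - v‖)
    (hstar : ℝ) (hlow : ∀ x, hstar ≤ h x) (hatt : ∃ x, h x = hstar)
    (hPL : ∀ x, 2 * μh * (h x - hstar) ≤ ‖gradient h x‖ ^ 2)
    (α L₀ : ℝ) (hα : 1 < α) (hL₀ : 0 < L₀)
    (x : ℕ → EuclideanSpace ℝ (Fin d)) (L γ : ℕ → ℝ)
    (hL0 : L 0 = L₀)
    (hγ : ∀ k : ℕ, γ (k + 1) =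
      (Finset.range (k + 1)).sup' (Finset.nonempty_range_iff.mpr (Nat.succ_ne_zero k)) L)
    (hx : ∀ k : ℕ, x (k + 1) = x k - (1 / (α * γ (k + 1))) • gradient h (x k))
    (hL : ∀ k : ℕ, L (k + 1) =
      2 * (h (x (k + 1)) - h (x k)
        - (inner ℝ (gradient h (x k)) (x (k + 1) - x k) : ℝ)) / ‖x (k + 1) - x k‖ ^ 2)
    (hgrad : ∀ k : ℕ, gradient h (x k) ≠ 0)
    (p Cbar Ch : ℝ) (mh : ℕ)
    (hp : p = μh * (α - 1) / (2 * α ^ 2 * max L₀ Lh))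
    (hmh : mh = ⌈Real.logb ((α + 1) / 2) (max L₀ Lh / L₀)⌉₊)
    (hCbar : Cbar = max (max (Lh ^ 3 / (μh * α ^ 2 * L₀ ^ 2)) (Lh ^ 2 / (μh * α ^ 2 * L₀)))
      (max (μh * Lh / (α ^ 2 * L₀ ^ 2)) (μh / (α ^ 2 * L₀))))
    (hCh : Ch = (1 + Cbar) ^ mh / (1 - p) ^ mh) :
    0 < p ∧ p < 1 ∧
      ∀ k : ℕ, h (x (k + 1)) - hstar ≤ Ch * (1 - p) ^ (k + 1) * (h (x 0) - hstar) := by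
  obtain ⟨xs, hxs⟩ := hatt
  have hLh : 0 < Lh := pos_of_lipschitz_gradient_of_forall_le hLip (hxs ▸ hlow) (hgrad 0)
  have hμLh : μh ≤ Lh := le_of_pl_of_lipschitz_gradient hdiff hLip hLh hlow hPL (hgrad 0)
  obtain ⟨hp0, hp1⟩ : 0 < p ∧ p < 1 :=
    hp ▸ rate_pos_and_lt_one hμ (hμLh.trans (le_max_right _ _)) hα
  have hγL₀ : ∀ k, L₀ ≤ γ (k + 1) := fun k => hL0 ▸ IsRunningMax.le hγ (Nat.zero_le k)
  have hstep : ∀ k, 1 / (α * γ (k + 1)) ≠ 0 := fun k => by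
    have := hL₀.trans_le (hγL₀ k); positivity
  have hLLh : ∀ k, L (k + 1) ≤ Lh := fun k => (hL k).trans_le <| secantCurvature_le hdiff hLip <| by
    rw [hx k, Ne, sub_eq_self]; exact smul_ne_zero (hstep k) (hgrad k)
  have hγΛ : ∀ k, γ (k + 1) ≤ max L₀ Lh := IsRunningMax.le_of_forall_le hγ fun
    | 0 => hL0 ▸ le_max_left _ _
    | i + 1 => (hLLh i).trans (le_max_right _ _)
  have hgap : ∀ k, h (x (k + 1)) - hstar =
      (h (x k) - hstar) - 1 / (α * γ (k + 1)) * ‖gradient h (x k)‖ ^ 2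
        + L (k + 1) / 2 * ((1 / (α * γ (k + 1))) ^ 2 * ‖gradient h (x k)‖ ^ 2) := fun k => by
    rw [image_sub_smul_gradient (hx k) (hstep k) (hgrad k) (hL k)]; ring
  have hK : Lh ^ 2 / (α ^ 2 * L₀ ^ 2) ≤ Cbar := hCbar ▸ le_max_of_le_left (le_max_of_le_left
    (by rw [mul_assoc]; exact sq_div_le_cube_div hμ hμLh (by positivity)))
  have hCbar0 : 0 ≤ Cbar := (by positivity : (0 : ℝ) ≤ Lh ^ 2 / (α ^ 2 * L₀ ^ 2)).trans hK
  refine ⟨hp0, hp1, fun k => ?_⟩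
  rw [hCh, ← div_pow]
  refine le_div_pow_mul_pow_mul_of_card_filter_le (e := fun k => h (x k) - hstar)
    (fun k => (α + 1) / 2 * γ (k + 1) < L (k + 1)) (sub_pos.2 hp1)
    (by linarith) (sub_nonneg.2 (hlow _))
    (fun k hk => (hgap k).trans_le (hp ▸ gap_step_le_contraction hα (hL₀.trans_le (hγL₀ k))
      (hγΛ k) (not_lt.1 hk) hμ.le (sub_nonneg.2 (hlow _)) (hPL _)))
    (fun k _ => (hgap k).trans_le (gap_step_le_expansion (by linarith) hL₀ (hγL₀ k) (hLLh k)
      hLh.le (sq_nonneg _) (sq_norm_gradient_le hdiff hLip hLh hlow _) hK (sub_nonneg.2 (hlow _))))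
    (fun k => hmh ▸ IsRunningMax.card_filter_le_ceil_logb hγ (by linarith) hL₀ hL0 hγΛ k) (k + 1)
end

section
/- Let h : ℝ^d → ℝ be differentiable with L_h-Lipschitz gradient, and let {x^k} be the AC-GM iterates with parameters α > 1, L_0 > 0, with ∇h(x^k) ≠ 0 for every k. Set β := (α+1)/2 and S̄ := {k ≥ 0 : L_{k+1} > β γ_{k+1}}. Then the cardinality of S̄ is at most m_h := ⌈log_β(max{L_0, L_h}/L_0)⌉₊, the smallest nonnegative integer greater than or equal to log_β(max{L_0, L_h}/L_0). -/
/-! `γ (k + 1)` is the running maximum of `L 0, …, L k`: it is nondecreasing, equals `L₀` at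
`k = 0`, and stays below `max L₀ Lh` because the descent lemma gives `L (k + 1) ≤ Lh`. At a bad
index, `γ (k + 2) ≥ L (k + 1) > β γ (k + 1)`, so each bad index multiplies `γ` by at least `β`, and
`β ^ #bad * L₀ ≤ max L₀ Lh`. -/

open Finset

section Descent

variable {E : Type*} [NormedAddCommGroup E] [InnerProductSpace ℝ E] [CompleteSpace E]

theorem image_sub_sub_inner_gradient_le {f : E → ℝ} (hf : Differentiable ℝ f) {K : ℝ}
    (hK : ∀ u v, ‖gradient f u - gradient f v‖ ≤ K * ‖u - v‖) (a b : E) :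
    f b - f a - inner ℝ (gradient f a) (b - a) ≤ K / 2 * ‖b - a‖ ^ 2 := by
  set v := b - a
  -- `φ` has derivative `⟪∇f (a + t v) - ∇f a, v⟫ - K t ‖v‖² ≤ 0` for `t ≥ 0`
  set φ : ℝ → ℝ := fun t ↦ f (a + t • v) - t * inner ℝ (gradient f a) v - K / 2 * t ^ 2 * ‖v‖ ^ 2
  have hφ' : ∀ t, HasDerivAt φ
      (inner ℝ (gradient f (a + t • v) - gradient f a) v - K * t * ‖v‖ ^ 2) t := by
    intro t
    have hline : HasDerivAt (fun t : ℝ ↦ a + t • v) v t := by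
      simpa using ((hasDerivAt_id t).smul_const v).const_add a
    have hcomp := (hf (a + t • v)).hasGradientAt.hasFDerivAt.comp_hasDerivAt t hline
    have := (hcomp.sub ((hasDerivAt_id t).mul_const (inner ℝ (gradient f a) v))).sub
      (((hasDerivAt_pow 2 t).const_mul (K / 2)).mul_const (‖v‖ ^ 2))
    refine this.congr_deriv ?_
    simp only [InnerProductSpace.toDual_apply_apply, inner_sub_left]
    push_cast
    ring
  have hanti : AntitoneOn φ (Set.Ici 0) := by
    refine antitoneOn_of_hasDerivWithinAt_nonpos (convex_Ici 0)
      (fun t _ ↦ (hφ' t).continuousAt.continuousWithinAt) (fun t _ ↦ (hφ' t).hasDerivWithinAt) ?_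
    intro t ht
    rw [interior_Ici, Set.mem_Ioi] at ht
    have hgrad : ‖gradient f (a + t • v) - gradient f a‖ ≤ K * (t * ‖v‖) := by
      simpa [norm_smul, abs_of_pos ht] using hK (a + t • v) a
    nlinarith [real_inner_le_norm (gradient f (a + t • v) - gradient f a) v, norm_nonneg v]
  have h01 := hanti Set.self_mem_Ici (Set.mem_Ici.2 zero_le_one) zero_le_one
  simp only [φ, v, one_smul, zero_smul, add_zero, add_sub_cancel] at h01
  linarith

theorem two_mul_bregman_div_norm_sq_le {f : E → ℝ} (hf : Differentiable ℝ f) {K : ℝ}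
    (hK : ∀ u v, ‖gradient f u - gradient f v‖ ≤ K * ‖u - v‖) {a b : E} (hab : b ≠ a) :
    2 * (f b - f a - inner ℝ (gradient f a) (b - a)) / ‖b - a‖ ^ 2 ≤ K := by
  have hpos : 0 < ‖b - a‖ ^ 2 := by positivity [sub_ne_zero.2 hab]
  rw [div_le_iff₀ hpos]
  linarith [image_sub_sub_inner_gradient_le hf hK a b]

end Descent

theorem Set.finite_and_ncard_le_of_forall_finset_card_le {α : Type*} {s : Set α} {m : ℕ}
    (hs : ∀ t : Finset α, ↑t ⊆ s → #t ≤ m) : s.Finite ∧ s.ncard ≤ m := by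
  have hfin : s.Finite := by
    by_contra hinf
    obtain ⟨t, hts, ht⟩ := Set.Infinite.exists_subset_card_eq hinf (m + 1)
    have := hs t hts
    omega
  refine ⟨hfin, ?_⟩
  rw [← hfin.coe_toFinset, Set.ncard_coe_finset]
  exact hs _ hfin.coe_toFinset.subset

theorem le_ceil_logb_of_pow_mul_le {β a M : ℝ} {c : ℕ} (hβ : 1 < β) (ha : 0 < a)
    (h : β ^ c * a ≤ M) : c ≤ ⌈Real.logb β (M / a)⌉₊ := by
  have hM : 0 < M := (mul_pos (pow_pos (by linarith) c) ha).trans_le h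
  have hlog : (c : ℝ) ≤ Real.logb β (M / a) := by
    rw [Real.le_logb_iff_rpow_le hβ (div_pos hM ha), Real.rpow_natCast]
    exact (le_div_iff₀ ha).2 h
  exact_mod_cast hlog.trans (Nat.le_ceil _)

namespace Monotone

variable {g : ℕ → ℝ} {β : ℝ}

theorem pow_card_filter_mul_le (hg : Monotone g) (hβ : 0 ≤ β) (n : ℕ) :
    β ^ #{k ∈ range n | β * g k ≤ g (k + 1)} * g 0 ≤ g n := by
  induction n with
  | zero => simp
  | succ n ih =>
    rw [range_add_one, filter_insert]
    split_ifs with hjump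
    · rw [card_insert_of_notMem (by simp), pow_succ', mul_assoc]
      exact (mul_le_mul_of_nonneg_left ih hβ).trans hjump
    · exact ih.trans (hg n.le_succ)

theorem finite_setOf_mul_le_succ (hg : Monotone g) (hβ : 1 < β) (hg0 : 0 < g 0) {M : ℝ}
    (hM : ∀ n, g n ≤ M) :
    {k | β * g k ≤ g (k + 1)}.Finite ∧
      {k | β * g k ≤ g (k + 1)}.ncard ≤ ⌈Real.logb β (M / g 0)⌉₊ := by
  refine Set.finite_and_ncard_le_of_forall_finset_card_le fun t ht ↦ ?_
  obtain ⟨n, hn⟩ := t.exists_nat_subset_range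
  have hsub : t ⊆ {k ∈ range n | β * g k ≤ g (k + 1)} := fun k hk ↦ mem_filter.2 ⟨hn hk, ht hk⟩
  refine (card_le_card hsub).trans (le_ceil_logb_of_pow_mul_le hβ hg0 ?_)
  exact (hg.pow_card_filter_mul_le (by linarith) n).trans (hM n)

end Monotone

/-- bound on the number of "bad" AC-GM indices.
For AC-GM iterates of a function with `Lh`-Lipschitz gradient, the set
`S̄ = {k : L_{k+1} > β γ_{k+1}}` (`β = (α+1)/2`) is finite with at most
`m_h = ⌈log_β (max{L₀, Lh} / L₀)⌉₊` elements. -/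
theorem acgm_bad_index_count
    {d : ℕ} (h : EuclideanSpace ℝ (Fin d) → ℝ) (hdiff : Differentiable ℝ h)
    (Lh : ℝ) (hLip : ∀ u v, ‖gradient h u - gradient h v‖ ≤ Lh * ‖u - v‖)
    (α L₀ : ℝ) (hα : 1 < α) (hL₀ : 0 < L₀)
    (x : ℕ → EuclideanSpace ℝ (Fin d)) (L γ : ℕ → ℝ)
    (hL0 : L 0 = L₀)
    (hγ : ∀ k : ℕ, γ (k + 1) =
      (Finset.range (k + 1)).sup' (Finset.nonempty_range_iff.mpr (Nat.succ_ne_zero k)) L)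
    (hx : ∀ k : ℕ, x (k + 1) = x k - (1 / (α * γ (k + 1))) • gradient h (x k))
    (hL : ∀ k : ℕ, L (k + 1) =
      2 * (h (x (k + 1)) - h (x k)
        - (inner ℝ (gradient h (x k)) (x (k + 1) - x k) : ℝ)) / ‖x (k + 1) - x k‖ ^ 2)
    (hgrad : ∀ k : ℕ, gradient h (x k) ≠ 0) :
    {k : ℕ | ((α + 1) / 2) * γ (k + 1) < L (k + 1)}.Finite ∧
      {k : ℕ | ((α + 1) / 2) * γ (k + 1) < L (k + 1)}.ncard ≤
        ⌈Real.logb ((α + 1) / 2) (max L₀ Lh / L₀)⌉₊ := by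
  set g : ℕ → ℝ := fun k ↦ γ (k + 1)
  have hg_mono : Monotone g := fun j k hjk ↦ by
    simp only [g, hγ]
    exact sup'_mono L (range_subset_range.2 (by omega)) _
  have hg0 : g 0 = L₀ := by simp [g, hγ, hL0]
  have hL_le : ∀ k, L (k + 1) ≤ Lh := fun k ↦ by
    have hγpos : 0 < γ (k + 1) := hL₀.trans_le (hg0 ▸ hg_mono k.zero_le)
    have hstep : x (k + 1) ≠ x k := by
      rw [hx k, ne_eq, sub_eq_self]
      exact smul_ne_zero (one_div_ne_zero (mul_pos (by linarith) hγpos).ne') (hgrad k)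
    rw [hL k]
    exact two_mul_bregman_div_norm_sq_le hdiff hLip hstep
  have hg_le : ∀ k, g k ≤ max L₀ Lh := fun k ↦ by
    simp only [g, hγ]
    refine sup'_le _ _ fun j _ ↦ ?_
    cases j with
    | zero => exact hL0 ▸ le_max_left _ _
    | succ j => exact (hL_le j).trans (le_max_right _ _)
  obtain ⟨hfin, hcard⟩ :=
    hg_mono.finite_setOf_mul_le_succ (by linarith : 1 < (α + 1) / 2) (hg0 ▸ hL₀) hg_le
  rw [hg0] at hcard
  have hsub : {k : ℕ | ((α + 1) / 2) * γ (k + 1) < L (k + 1)} ⊆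
      {k | (α + 1) / 2 * g k ≤ g (k + 1)} := fun k hk ↦
    hk.le.trans ((hγ (k + 1)).symm ▸ le_sup' L (self_mem_range_succ (k + 1)))
  exact ⟨hfin.subset hsub, (Set.ncard_le_ncard hsub hfin).trans hcard⟩
end

section
/- Let h : ℝ^d → ℝ be differentiable and μ_h-PŁ (μ_h > 0) with attained infimum h*, and let {x^k} be AC-GM iterates with parameters α > 1, L_0 > 0, with ∇h(x^k) ≠ 0. Set β := (α+1)/2. If an index k satisfies L_{k+1} ≤ β γ_{k+1}, then h(x^k) − h(x^{k+1}) ≥ ((α−1)/(4α² γ_{k+1})) ‖∇h(x^k)‖², and consequently h(x^{k+1}) − h* ≤ (1 − μ_h(α−1)/(2α² γ_{k+1}))(h(x^k) − h*). -/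
/-!
On a good index the local curvature estimate `L_{k+1}` is at most `β γ_{k+1}`, so the exact
second-order expansion of `h` along the step `-t ∇h(x^k)`, `t = 1/(α γ_{k+1})`, gives a decrease
of at least `(t - β γ_{k+1} t² / 2) ‖∇h(x^k)‖² ≥ (α-1)/(4α²γ_{k+1}) ‖∇h(x^k)‖²`.
The PŁ inequality turns this sufficient decrease into a linear contraction of the gap to `h*`.
-/

open scoped RealInnerProductSpace

section GradientStep

variable {E : Type*} [NormedAddCommGroup E] [InnerProductSpace ℝ E]

theorem sub_eq_of_gradient_step {f : E → ℝ} {x x' g : E} {t L : ℝ} (ht : t ≠ 0) (hg : g ≠ 0)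
    (hx' : x' = x - t • g) (hL : L = 2 * (f x' - f x - ⟪g, x' - x⟫) / ‖x' - x‖ ^ 2) :
    f x - f x' = (t - L * t ^ 2 / 2) * ‖g‖ ^ 2 := by
  have hstep : x' - x = -(t • g) := by rw [hx', sub_sub_cancel_left]
  have hnorm : ‖x' - x‖ ^ 2 = t ^ 2 * ‖g‖ ^ 2 := by
    rw [hstep, norm_neg, norm_smul, mul_pow, Real.norm_eq_abs, sq_abs]
  have hinner : ⟪g, x' - x⟫ = -(t * ‖g‖ ^ 2) := by
    rw [hstep, inner_neg_right, real_inner_smul_right, real_inner_self_eq_norm_sq]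
  have hg2 : ‖g‖ ^ 2 ≠ 0 := by positivity
  rw [hnorm, hinner] at hL
  rw [hL]
  field_simp
  ring

theorem sub_le_mul_of_isPL_of_descent [CompleteSpace E] {f : E → ℝ} {x x' : E} {μ c fstar : ℝ}
    (hc : 0 ≤ c) (hPL : 2 * μ * (f x - fstar) ≤ ‖gradient f x‖ ^ 2)
    (hdec : c * ‖gradient f x‖ ^ 2 ≤ f x - f x') :
    f x' - fstar ≤ (1 - 2 * μ * c) * (f x - fstar) := by
  nlinarith [mul_le_mul_of_nonneg_left hPL hc]

end GradientStep

theorem acgm_descent_coeff_le {α γ L : ℝ} (hα : 1 < α) (hγ : 0 < γ)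
    (hL : L ≤ (α + 1) / 2 * γ) :
    (α - 1) / (4 * α ^ 2 * γ) ≤ 1 / (α * γ) - L * (1 / (α * γ)) ^ 2 / 2 := by
  have hα0 : 0 < α := by linarith
  have hcurv : L * (1 / (α * γ)) ^ 2 / 2 ≤ (α + 1) / 2 * γ * (1 / (α * γ)) ^ 2 / 2 := by
    gcongr
  have hgap : 1 / (α * γ) - (α + 1) / 2 * γ * (1 / (α * γ)) ^ 2 / 2 - (α - 1) / (4 * α ^ 2 * γ)
      = 1 / (2 * α * γ) := by
    field_simp
    ring
  have : 0 < 1 / (2 * α * γ) := by positivity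
  linarith

theorem acgm_good_step_general
    {d : ℕ} (h : EuclideanSpace ℝ (Fin d) → ℝ)
    (μh : ℝ)
    (hstar : ℝ)
    (hPL : ∀ x, 2 * μh * (h x - hstar) ≤ ‖gradient h x‖ ^ 2)
    (α L₀ : ℝ) (hα : 1 < α) (hL₀ : 0 < L₀)
    (x : ℕ → EuclideanSpace ℝ (Fin d)) (L γ : ℕ → ℝ)
    (hL0 : L 0 = L₀)
    (hγ : ∀ k : ℕ, γ (k + 1) =
      (Finset.range (k + 1)).sup' (Finset.nonempty_range_iff.mpr (Nat.succ_ne_zero k)) L)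
    (hx : ∀ k : ℕ, x (k + 1) = x k - (1 / (α * γ (k + 1))) • gradient h (x k))
    (hL : ∀ k : ℕ, L (k + 1) =
      2 * (h (x (k + 1)) - h (x k)
        - (inner ℝ (gradient h (x k)) (x (k + 1) - x k) : ℝ)) / ‖x (k + 1) - x k‖ ^ 2)
    (hgrad : ∀ k : ℕ, gradient h (x k) ≠ 0)
    (k : ℕ) (hk : L (k + 1) ≤ ((α + 1) / 2) * γ (k + 1)) :
    (α - 1) / (4 * α ^ 2 * γ (k + 1)) * ‖gradient h (x k)‖ ^ 2 ≤ h (x k) - h (x (k + 1)) ∧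
      h (x (k + 1)) - hstar ≤
        (1 - μh * (α - 1) / (2 * α ^ 2 * γ (k + 1))) * (h (x k) - hstar) := by
  have hγpos : 0 < γ (k + 1) := by
    rw [hγ k]
    exact hL₀.trans_le (hL0 ▸ Finset.le_sup' L (Finset.mem_range.mpr k.succ_pos))
  have hα0 : 0 < α := by linarith
  have hdec := sub_eq_of_gradient_step (by positivity) (hgrad k) (hx k) (hL k)
  have hsuff : (α - 1) / (4 * α ^ 2 * γ (k + 1)) * ‖gradient h (x k)‖ ^ 2
      ≤ h (x k) - h (x (k + 1)) := by
    rw [hdec]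
    exact mul_le_mul_of_nonneg_right (acgm_descent_coeff_le hα hγpos hk) (sq_nonneg _)
  refine ⟨hsuff, ?_⟩
  have hc : 0 ≤ (α - 1) / (4 * α ^ 2 * γ (k + 1)) := div_nonneg (by linarith) (by positivity)
  convert sub_le_mul_of_isPL_of_descent hc (hPL (x k)) hsuff using 3
  field_simp
  ring

/-- AC-GM one-step descent on "good" indices.
If `k` is an index with `L_{k+1} ≤ β γ_{k+1}` (`β = (α+1)/2`), then
`h(x^k) - h(x^{k+1}) ≥ ((α-1)/(4α²γ_{k+1})) ‖∇h(x^k)‖²` and consequently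
`h(x^{k+1}) - h* ≤ (1 - μ_h(α-1)/(2α²γ_{k+1})) (h(x^k) - h*)`. -/
theorem acgm_good_step
    {d : ℕ} (h : EuclideanSpace ℝ (Fin d) → ℝ) (hdiff : Differentiable ℝ h)
    (μh : ℝ) (hμ : 0 < μh)
    (hstar : ℝ) (hlow : ∀ x, hstar ≤ h x) (hatt : ∃ x, h x = hstar)
    (hPL : ∀ x, 2 * μh * (h x - hstar) ≤ ‖gradient h x‖ ^ 2)
    (α L₀ : ℝ) (hα : 1 < α) (hL₀ : 0 < L₀)
    (x : ℕ → EuclideanSpace ℝ (Fin d)) (L γ : ℕ → ℝ)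
    (hL0 : L 0 = L₀)
    (hγ : ∀ k : ℕ, γ (k + 1) =
      (Finset.range (k + 1)).sup' (Finset.nonempty_range_iff.mpr (Nat.succ_ne_zero k)) L)
    (hx : ∀ k : ℕ, x (k + 1) = x k - (1 / (α * γ (k + 1))) • gradient h (x k))
    (hL : ∀ k : ℕ, L (k + 1) =
      2 * (h (x (k + 1)) - h (x k)
        - (inner ℝ (gradient h (x k)) (x (k + 1) - x k) : ℝ)) / ‖x (k + 1) - x k‖ ^ 2)
    (hgrad : ∀ k : ℕ, gradient h (x k) ≠ 0)
    (k : ℕ) (hk : L (k + 1) ≤ ((α + 1) / 2) * γ (k + 1)) :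
    (α - 1) / (4 * α ^ 2 * γ (k + 1)) * ‖gradient h (x k)‖ ^ 2 ≤ h (x k) - h (x (k + 1)) ∧
      h (x (k + 1)) - hstar ≤
        (1 - μh * (α - 1) / (2 * α ^ 2 * γ (k + 1))) * (h (x k) - hstar) :=
  acgm_good_step_general h μh hstar hPL α L₀ hα hL₀ x L γ hL0 hγ hx hL hgrad k hk
end

section
/- Let ψ : ℝ^d → ℝ be differentiable with L-Lipschitz gradient, let x ∈ ℝ^d, let d ∈ ℝ^d be an approximate gradient satisfying ‖d − ∇ψ(x)‖² ≤ ε̂ for some ε̂ ≥ 0, let a > 0, and set x' := x − (1/a) d. Then ψ(x') ≤ ψ(x) − (1/(2a)) ‖∇ψ(x)‖² − (1/(2a))(1 − L/a) ‖d‖² + ε̂/(2a). In particular, if a ≥ 2L, then ψ(x') ≤ ψ(x) − (1/(2a)) ‖∇ψ(x)‖² − (1/(4a)) ‖d‖² + ε̂/(2a). -/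
/-!
Along `t ↦ x + t • v`, the function `f (x + t • v) - t ⟪∇f x, v⟫ - (L/2) t² ‖v‖²` has derivative
`⟪∇f (x + t • v) - ∇f x, v⟫ - L t ‖v‖² ≤ 0` for `t ≥ 0`, which gives the descent lemma
`f y ≤ f x + ⟪∇f x, y - x⟫ + (L/2) ‖y - x‖²`. At `y = x - (1/a) d` the linear term is rewritten by
polarization, `2 ⟪∇f x, d⟫ = ‖∇f x‖² + ‖d‖² - ‖d - ∇f x‖²`, and the bias bound controls the last
square.
-/

open InnerProductSpace Set

section

variable {E : Type*} [NormedAddCommGroup E] [InnerProductSpace ℝ E] [CompleteSpace E]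
  {f : E → ℝ} {L : ℝ}

lemma hasDerivAt_comp_add_smul (hf : Differentiable ℝ f) (x v : E) (t : ℝ) :
    HasDerivAt (fun s : ℝ => f (x + s • v)) ⟪gradient f (x + t • v), v⟫_ℝ t := by
  have hline : HasDerivAt (fun s : ℝ => x + s • v) v t := by
    simpa using ((hasDerivAt_id t).smul_const v).const_add x
  exact (hf _).hasGradientAt.hasFDerivAt.comp_hasDerivAt t hline

theorem le_add_inner_gradient_add_sq_of_lipschitz_gradient (hf : Differentiable ℝ f)
    (hL : ∀ u v, ‖gradient f u - gradient f v‖ ≤ L * ‖u - v‖) (x y : E) :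
    f y ≤ f x + ⟪gradient f x, y - x⟫_ℝ + L / 2 * ‖y - x‖ ^ 2 := by
  set v := y - x
  let φ : ℝ → ℝ := fun t => f (x + t • v) - t * ⟪gradient f x, v⟫_ℝ - L / 2 * ‖v‖ ^ 2 * t ^ 2
  have hφ : ∀ t, HasDerivAt φ
      (⟪gradient f (x + t • v), v⟫_ℝ - ⟪gradient f x, v⟫_ℝ - L * ‖v‖ ^ 2 * t) t := by
    intro t
    refine (((hasDerivAt_comp_add_smul hf x v t).sub
      ((hasDerivAt_id t).mul_const ⟪gradient f x, v⟫_ℝ)).sub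
        ((hasDerivAt_pow 2 t).const_mul (L / 2 * ‖v‖ ^ 2))).congr_deriv ?_
    simp only [Nat.cast_ofNat]
    ring
  have hφ_nonpos : ∀ t ∈ interior (Ici (0 : ℝ)),
      ⟪gradient f (x + t • v), v⟫_ℝ - ⟪gradient f x, v⟫_ℝ - L * ‖v‖ ^ 2 * t ≤ 0 := by
    intro t ht
    rw [interior_Ici, mem_Ioi] at ht
    have hgrad : ‖gradient f (x + t • v) - gradient f x‖ ≤ L * t * ‖v‖ := by
      simpa [norm_smul, abs_of_pos ht, mul_assoc] using hL (x + t • v) x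
    refine sub_nonpos.mpr ?_
    calc ⟪gradient f (x + t • v), v⟫_ℝ - ⟪gradient f x, v⟫_ℝ
        = ⟪gradient f (x + t • v) - gradient f x, v⟫_ℝ := (inner_sub_left _ _ _).symm
      _ ≤ ‖gradient f (x + t • v) - gradient f x‖ * ‖v‖ := real_inner_le_norm _ _
      _ ≤ L * t * ‖v‖ * ‖v‖ := by gcongr
      _ = L * ‖v‖ ^ 2 * t := by ring
  have hanti : AntitoneOn φ (Ici 0) :=
    antitoneOn_of_hasDerivWithinAt_nonpos (convex_Ici 0)
      (fun t _ => (hφ t).continuousAt.continuousWithinAt)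
      (fun t _ => (hφ t).hasDerivWithinAt) hφ_nonpos
  have h10 : φ 1 ≤ φ 0 := hanti self_mem_Ici (mem_Ici.mpr zero_le_one) zero_le_one
  simp only [φ, one_smul, zero_smul, add_zero, add_sub_cancel, v] at h10
  linarith

theorem le_of_biased_gradient_step (hf : Differentiable ℝ f)
    (hL : ∀ u v, ‖gradient f u - gradient f v‖ ≤ L * ‖u - v‖) (x d : E) {a : ℝ} (ha : a ≠ 0) :
    f (x - (1 / a) • d) ≤ f x - 1 / (2 * a) * ‖gradient f x‖ ^ 2
        - 1 / (2 * a) * (1 - L / a) * ‖d‖ ^ 2 + ‖d - gradient f x‖ ^ 2 / (2 * a) := by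
  have hstep : x - (1 / a) • d - x = -((1 / a) • d) := sub_sub_cancel_left x _
  calc f (x - (1 / a) • d)
      ≤ f x + ⟪gradient f x, -((1 / a) • d)⟫_ℝ + L / 2 * ‖-((1 / a) • d)‖ ^ 2 := by
        simpa only [hstep] using
          le_add_inner_gradient_add_sq_of_lipschitz_gradient hf hL x (x - (1 / a) • d)
    _ = f x - 1 / a * ⟪gradient f x, d⟫_ℝ + L / 2 * (1 / a) ^ 2 * ‖d‖ ^ 2 := by
        rw [inner_neg_right, real_inner_smul_right, norm_neg, norm_smul, Real.norm_eq_abs,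
          mul_pow, sq_abs]
        ring
    _ = f x - 1 / (2 * a) * ‖gradient f x‖ ^ 2
        - 1 / (2 * a) * (1 - L / a) * ‖d‖ ^ 2 + ‖d - gradient f x‖ ^ 2 / (2 * a) := by
        rw [norm_sub_sq_real, real_inner_comm]
        field_simp
        ring

end

theorem biased_descent_step_general
    {n : ℕ} (ψ : EuclideanSpace ℝ (Fin n) → ℝ) (hdiff : Differentiable ℝ ψ)
    (L : ℝ) (hLip : ∀ u v, ‖gradient ψ u - gradient ψ v‖ ≤ L * ‖u - v‖)
    (x dvec : EuclideanSpace ℝ (Fin n)) (εhat : ℝ)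
    (hbias : ‖dvec - gradient ψ x‖ ^ 2 ≤ εhat) (a : ℝ) (ha : 0 < a) :
    ψ (x - (1 / a) • dvec) ≤ ψ x - 1 / (2 * a) * ‖gradient ψ x‖ ^ 2
        - 1 / (2 * a) * (1 - L / a) * ‖dvec‖ ^ 2 + εhat / (2 * a) ∧
      (2 * L ≤ a →
        ψ (x - (1 / a) • dvec) ≤ ψ x - 1 / (2 * a) * ‖gradient ψ x‖ ^ 2
          - 1 / (4 * a) * ‖dvec‖ ^ 2 + εhat / (2 * a)) := by
  have hdesc : ψ (x - (1 / a) • dvec) ≤ ψ x - 1 / (2 * a) * ‖gradient ψ x‖ ^ 2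
      - 1 / (2 * a) * (1 - L / a) * ‖dvec‖ ^ 2 + εhat / (2 * a) :=
    (le_of_biased_gradient_step hdiff hLip x dvec ha.ne').trans (by gcongr)
  refine ⟨hdesc, fun h2L => hdesc.trans ?_⟩
  have hcoeff : 1 / (4 * a) ≤ 1 / (2 * a) * (1 - L / a) := by
    field_simp
    linarith
  gcongr

/-- one-step descent along a biased gradient direction.
For `ψ` with `L`-Lipschitz gradient, a step `x' = x - (1/a) d` with bias
`‖d - ∇ψ(x)‖² ≤ εhat` satisfies
`ψ(x') ≤ ψ(x) - (1/(2a))‖∇ψ(x)‖² - (1/(2a))(1 - L/a)‖d‖² + εhat/(2a)`,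
and if moreover `a ≥ 2L`, then
`ψ(x') ≤ ψ(x) - (1/(2a))‖∇ψ(x)‖² - (1/(4a))‖d‖² + εhat/(2a)`. -/
theorem biased_descent_step
    {n : ℕ} (ψ : EuclideanSpace ℝ (Fin n) → ℝ) (hdiff : Differentiable ℝ ψ)
    (L : ℝ) (hLip : ∀ u v, ‖gradient ψ u - gradient ψ v‖ ≤ L * ‖u - v‖)
    (x dvec : EuclideanSpace ℝ (Fin n)) (εhat : ℝ) (hε : 0 ≤ εhat)
    (hbias : ‖dvec - gradient ψ x‖ ^ 2 ≤ εhat) (a : ℝ) (ha : 0 < a) :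
    ψ (x - (1 / a) • dvec) ≤ ψ x - 1 / (2 * a) * ‖gradient ψ x‖ ^ 2
        - 1 / (2 * a) * (1 - L / a) * ‖dvec‖ ^ 2 + εhat / (2 * a) ∧
      (2 * L ≤ a →
        ψ (x - (1 / a) • dvec) ≤ ψ x - 1 / (2 * a) * ‖gradient ψ x‖ ^ 2
          - 1 / (4 * a) * ‖dvec‖ ^ 2 + εhat / (2 * a)) :=
  biased_descent_step_general ψ hdiff L hLip x dvec εhat hbias a ha
end

section
/- Let h : ℝ^d → ℝ be differentiable, let x^0 ∈ ℝ^d, b_0 > 0, and let {x^k, b_k} be the AdaGrad-Norm iterates b_{k+1}² = b_k² + ‖∇h(x^k)‖², x^{k+1} = x^k − (1/b_{k+1}) ∇h(x^k). Let ε > 0 and C ≥ b_0. If ‖∇h(x^k)‖ > ε for all 0 ≤ k ≤ K−1 and b_k ≤ C for all 0 ≤ k ≤ K, then b_K² ≥ b_0² (1 + ε²/C²)^K, and consequently K ≤ log(C²/b_0²)/log(1 + ε²/C²). -/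
/-! While `‖∇h(x^k)‖ > ε` and `b_k ≤ C`, each step multiplies `b_k²` by at least `1 + ε²/C²`,
because `‖∇h(x^k)‖² > ε² ≥ b_k² ε²/C²`. So `b_K²` grows geometrically, and the cap `b_K ≤ C`
bounds the number of such steps logarithmically. -/

open Real

lemma sq_mul_one_add_sq_div_sq_le {β g ε C : ℝ} (hβ : 0 ≤ β) (hβC : β ≤ C) (hεg : ε ^ 2 ≤ g ^ 2) :
    β ^ 2 * (1 + ε ^ 2 / C ^ 2) ≤ β ^ 2 + g ^ 2 := by
  have hβε : β ^ 2 * (ε ^ 2 / C ^ 2) ≤ ε ^ 2 := by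
    rcases (hβ.trans hβC).eq_or_lt with rfl | hC
    · simpa using sq_nonneg ε
    · rw [mul_div_assoc', div_le_iff₀ (by positivity), mul_comm]
      gcongr
  linarith [mul_one_add (β ^ 2) (ε ^ 2 / C ^ 2)]

lemma natCast_le_log_div_log_of_mul_pow_le {a c r : ℝ} {K : ℕ} (ha : 0 < a) (hr : 1 < r)
    (h : a * r ^ K ≤ c) : (K : ℝ) ≤ log (c / a) / log r := by
  rw [le_div_iff₀ (log_pos hr), ← log_pow]
  exact log_le_log (by positivity) ((le_div_iff₀' ha).2 h)

section SqrtRecurrence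

variable {b g : ℕ → ℝ}

lemma sq_succ_of_eq_sqrt (hb : ∀ k, b (k + 1) = √(b k ^ 2 + g k ^ 2)) (k : ℕ) :
    b (k + 1) ^ 2 = b k ^ 2 + g k ^ 2 := by
  rw [hb, sq_sqrt (by positivity)]

lemma nonneg_of_eq_sqrt (hb0 : 0 ≤ b 0) (hb : ∀ k, b (k + 1) = √(b k ^ 2 + g k ^ 2)) :
    ∀ k, 0 ≤ b k
  | 0 => hb0
  | k + 1 => hb k ▸ sqrt_nonneg _

lemma one_add_sq_div_sq_pow_mul_le_of_eq_sqrt {ε C : ℝ} {K : ℕ} (hb0 : 0 ≤ b 0)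
    (hb : ∀ k, b (k + 1) = √(b k ^ 2 + g k ^ 2)) (hε : 0 ≤ ε) (hg : ∀ k < K, ε ≤ g k)
    (hC : ∀ k ≤ K, b k ≤ C) :
    (1 + ε ^ 2 / C ^ 2) ^ K * b 0 ^ 2 ≤ b K ^ 2 :=
  geom_le (u := fun k ↦ b k ^ 2) (by positivity) K fun k hk ↦ by
    rw [mul_comm, sq_succ_of_eq_sqrt hb k]
    exact sq_mul_one_add_sq_div_sq_le (nonneg_of_eq_sqrt hb0 hb k) (hC k hk.le)
      (pow_le_pow_left₀ hε (hg k hk) 2)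

end SqrtRecurrence

theorem adagrad_stage_one_bound_general
    {n : ℕ} (h : EuclideanSpace ℝ (Fin n) → ℝ)
    (b₀ : ℝ) (hb₀ : 0 < b₀)
    (x : ℕ → EuclideanSpace ℝ (Fin n)) (b : ℕ → ℝ)
    (hb0 : b 0 = b₀)
    (hb : ∀ k : ℕ, b (k + 1) = Real.sqrt (b k ^ 2 + ‖gradient h (x k)‖ ^ 2))
    (ε C : ℝ) (hε : 0 < ε) (hC : b₀ ≤ C)
    (K : ℕ)
    (hbig : ∀ k < K, ε < ‖gradient h (x k)‖)
    (hbound : ∀ k ≤ K, b k ≤ C) :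
    b₀ ^ 2 * (1 + ε ^ 2 / C ^ 2) ^ K ≤ b K ^ 2 ∧
      (K : ℝ) ≤ Real.log (C ^ 2 / b₀ ^ 2) / Real.log (1 + ε ^ 2 / C ^ 2) := by
  subst hb0
  have hC0 : 0 < C := hb₀.trans_le hC
  have hgrowth : b 0 ^ 2 * (1 + ε ^ 2 / C ^ 2) ^ K ≤ b K ^ 2 := by
    rw [mul_comm]
    exact one_add_sq_div_sq_pow_mul_le_of_eq_sqrt (g := fun k ↦ ‖gradient h (x k)‖) hb₀.le hb
      hε.le (fun k hk ↦ (hbig k hk).le) hbound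
  have hbK : b K ^ 2 ≤ C ^ 2 :=
    pow_le_pow_left₀ (nonneg_of_eq_sqrt hb₀.le hb K) (hbound K le_rfl) 2
  refine ⟨hgrowth, natCast_le_log_div_log_of_mul_pow_le (by positivity) ?_ (hgrowth.trans hbK)⟩
  exact lt_add_of_pos_right 1 (by positivity)

/-- Stage-1 bound for AdaGrad-Norm.
If along the AdaGrad-Norm iteration `‖∇h(x^k)‖ > ε` for all `k < K` while `b_k ≤ C` for
all `k ≤ K` (with `C ≥ b₀`), then `b_K² ≥ b₀²(1 + ε²/C²)^K`, and consequently
`K ≤ log(C²/b₀²) / log(1 + ε²/C²)`. -/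
theorem adagrad_stage_one_bound
    {n : ℕ} (h : EuclideanSpace ℝ (Fin n) → ℝ) (hdiff : Differentiable ℝ h)
    (b₀ : ℝ) (hb₀ : 0 < b₀)
    (x : ℕ → EuclideanSpace ℝ (Fin n)) (b : ℕ → ℝ)
    (hb0 : b 0 = b₀)
    (hb : ∀ k : ℕ, b (k + 1) = Real.sqrt (b k ^ 2 + ‖gradient h (x k)‖ ^ 2))
    (hx : ∀ k : ℕ, x (k + 1) = x k - (1 / b (k + 1)) • gradient h (x k))
    (ε C : ℝ) (hε : 0 < ε) (hC : b₀ ≤ C)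
    (K : ℕ)
    (hbig : ∀ k < K, ε < ‖gradient h (x k)‖)
    (hbound : ∀ k ≤ K, b k ≤ C) :
    b₀ ^ 2 * (1 + ε ^ 2 / C ^ 2) ^ K ≤ b K ^ 2 ∧
      (K : ℝ) ≤ Real.log (C ^ 2 / b₀ ^ 2) / Real.log (1 + ε ^ 2 / C ^ 2) :=
  adagrad_stage_one_bound_general h b₀ hb₀ x b hb0 hb ε C hε hC K hbig hbound
end

section
/- For any finite sequence of nonnegative reals a_1, …, a_T with a_1 ≥ 1, it holds that Σ_{l=1}^{T} a_l / (Σ_{i=1}^{l} a_i) ≤ log(Σ_{l=1}^{T} a_l) + 1. -/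
/-!
Write `S_l = a_1 + ⋯ + a_l`. Since `1 - 1/x ≤ log x`, each term with `l ≥ 2` satisfies
`a_l / S_l = 1 - S_{l-1} / S_l ≤ log S_l - log S_{l-1}`, so these terms telescope to at most
`log S_T - log S_1 ≤ log S_T`, while the first term is `a_1 / a_1 = 1`.
-/

open Finset Real

lemma div_add_le_log_add_sub_log {s x : ℝ} (hs : 0 < s) (hx : 0 ≤ x) :
    x / (s + x) ≤ log (s + x) - log s := by
  have hsx : 0 < s + x := by linarith
  have h := one_sub_inv_le_log_of_pos (div_pos hsx hs)
  rw [log_div hsx.ne' hs.ne', inv_div] at h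
  calc x / (s + x) = 1 - s / (s + x) := by field_simp; ring
    _ ≤ log (s + x) - log s := h

lemma one_le_sum_Icc_one {a : ℕ → ℝ} {T : ℕ} (hT : 1 ≤ T)
    (hnonneg : ∀ l, 1 ≤ l → l ≤ T → 0 ≤ a l) (ha1 : 1 ≤ a 1) :
    1 ≤ ∑ i ∈ Icc 1 T, a i :=
  ha1.trans <| single_le_sum (fun i hi ↦ hnonneg i (mem_Icc.1 hi).1 (mem_Icc.1 hi).2)
    (mem_Icc.2 ⟨le_rfl, hT⟩)

theorem sum_ratio_le_log_add_one_general
    (T : ℕ) (a : ℕ → ℝ)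
    (hnonneg : ∀ l, 1 ≤ l → l ≤ T → 0 ≤ a l) (ha1 : 1 ≤ a 1) :
    ∑ l ∈ Finset.Icc 1 T, a l / ∑ i ∈ Finset.Icc 1 l, a i ≤
      Real.log (∑ l ∈ Finset.Icc 1 T, a l) + 1 := by
  induction T with
  | zero => simp
  | succ T ih =>
    rw [sum_Icc_succ_top (by omega), sum_Icc_succ_top (by omega)]
    rcases Nat.eq_zero_or_pos T with rfl | hT
    · simp only [Icc_eq_empty_of_lt zero_lt_one, sum_empty, zero_add]
      rw [div_self (by linarith)]
      linarith [log_nonneg ha1]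
    · have hnonneg' : ∀ l, 1 ≤ l → l ≤ T → 0 ≤ a l := fun l h1 h2 ↦ hnonneg l h1 (by omega)
      have hS := one_le_sum_Icc_one hT hnonneg' ha1
      have hstep := div_add_le_log_add_sub_log (zero_lt_one.trans_le hS)
        (hnonneg (T + 1) (by omega) le_rfl)
      linarith [ih hnonneg']

/-- summation lemma, Ward et al. Lemma 3.2.
For nonnegative reals `a₁, …, a_T` with `a₁ ≥ 1`,
`Σ_{l=1}^T a_l / (Σ_{i=1}^l a_i) ≤ log(Σ_{l=1}^T a_l) + 1`. -/
theorem sum_ratio_le_log_add_one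
    (T : ℕ) (hT : 1 ≤ T) (a : ℕ → ℝ)
    (hnonneg : ∀ l, 1 ≤ l → l ≤ T → 0 ≤ a l) (ha1 : 1 ≤ a 1) :
    ∑ l ∈ Finset.Icc 1 T, a l / ∑ i ∈ Finset.Icc 1 l, a i ≤
      Real.log (∑ l ∈ Finset.Icc 1 T, a l) + 1 :=
  sum_ratio_le_log_add_one_general T a hnonneg ha1
end

section
/- Let h : ℝ^d → ℝ be differentiable with L-Lipschitz gradient and bounded below by h*, and let {x^k, b_k} be AdaGrad-Norm iterates: b_{k+1}² = b_k² + ‖∇h(x^k)‖², x^{k+1} = x^k − (1/b_{k+1}) ∇h(x^k). Suppose k_1 is an index such that b_{k+1} ≥ L for all k ≥ k_1. Then for every K > k_1, b_K ≤ b_{k_1} + 2 (h(x^{k_1}) − h*). -/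
/-!
For `k ≥ k₁` the step `1 / b_{k+1}` is at most `1 / L`, so the descent lemma yields the sufficient
decrease `‖∇h(x^k)‖² ≤ 2 b_{k+1} (h(x^k) - h(x^{k+1}))`; in particular `h(x^k)` is nonincreasing
from `k₁` on. Since `b` is nondecreasing, summing these inequalities telescopes to
`b_K² - b_{k₁}² ≤ 2 b_K (h(x^{k₁}) - h(x^K)) ≤ 2 b_K (h(x^{k₁}) - h*)`, and dividing
`(b_K - b_{k₁}) (b_K + b_{k₁})` by `b_K` gives the bound.
-/

section LipschitzGradient

variable {E : Type*} [NormedAddCommGroup E] [InnerProductSpace ℝ E] [CompleteSpace E]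
  {h : E → ℝ} {L : ℝ}

theorem apply_add_le_of_lipschitz_gradient (hdiff : Differentiable ℝ h)
    (hLip : ∀ u v, ‖gradient h u - gradient h v‖ ≤ L * ‖u - v‖) (x v : E) :
    h (x + v) ≤ h x + inner ℝ (gradient h x) v + L / 2 * ‖v‖ ^ 2 := by
  set φ : ℝ → ℝ := fun t ↦
    h (x + t • v) - t * inner ℝ (gradient h x) v - L / 2 * t ^ 2 * ‖v‖ ^ 2
  have hφ' : ∀ t, HasDerivAt φ
      (inner ℝ (gradient h (x + t • v) - gradient h x) v - L * t * ‖v‖ ^ 2) t := by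
    intro t
    have hline : HasDerivAt (fun t : ℝ ↦ x + t • v) v t := by
      simpa using ((hasDerivAt_id t).smul_const v).const_add x
    have hcomp :
        HasDerivAt (fun t : ℝ ↦ h (x + t • v)) (inner ℝ (gradient h (x + t • v)) v) t := by
      rw [inner_gradient_left]
      exact (hdiff _).hasFDerivAt.comp_hasDerivAt t hline
    have hlin :
        HasDerivAt (fun t : ℝ ↦ t * inner ℝ (gradient h x) v) (inner ℝ (gradient h x) v) t := by
      simpa using (hasDerivAt_id t).mul_const (inner ℝ (gradient h x) v)
    have hquad : HasDerivAt (fun t : ℝ ↦ L / 2 * t ^ 2 * ‖v‖ ^ 2) (L * t * ‖v‖ ^ 2) t :=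
      (((hasDerivAt_pow 2 t).const_mul (L / 2)).mul_const (‖v‖ ^ 2)).congr_deriv
        (by simp only [Nat.cast_ofNat, Nat.add_one_sub_one, pow_one]; ring)
    rw [inner_sub_left]
    exact (hcomp.sub hlin).sub hquad
  have hanti : AntitoneOn φ (Set.Icc 0 1) := by
    refine antitoneOn_of_hasDerivWithinAt_nonpos (convex_Icc 0 1)
      (fun t _ ↦ (hφ' t).continuousAt.continuousWithinAt) (fun t _ ↦ (hφ' t).hasDerivWithinAt) ?_
    intro t ht
    rw [interior_Icc] at ht
    obtain ⟨ht, -⟩ := ht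
    have hgrad : ‖gradient h (x + t • v) - gradient h x‖ ≤ L * (t * ‖v‖) := by
      simpa [norm_smul, abs_of_pos ht] using hLip (x + t • v) x
    calc inner ℝ (gradient h (x + t • v) - gradient h x) v - L * t * ‖v‖ ^ 2
        ≤ ‖gradient h (x + t • v) - gradient h x‖ * ‖v‖ - L * t * ‖v‖ ^ 2 := by
          gcongr; exact real_inner_le_norm _ _
      _ ≤ L * (t * ‖v‖) * ‖v‖ - L * t * ‖v‖ ^ 2 := by gcongr
      _ = 0 := by ring
  have := hanti (by simp) (by simp) zero_le_one
  simp only [φ, one_smul, zero_smul, add_zero] at this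
  linarith

theorem sq_norm_gradient_le_of_lipschitz_gradient (hdiff : Differentiable ℝ h)
    (hLip : ∀ u v, ‖gradient h u - gradient h v‖ ≤ L * ‖u - v‖) {β : ℝ} (hβ : 0 < β)
    (hLβ : L ≤ β) (x : E) :
    ‖gradient h x‖ ^ 2 ≤ 2 * β * (h x - h (x - (1 / β) • gradient h x)) := by
  have hdesc := apply_add_le_of_lipschitz_gradient hdiff hLip x (-((1 / β) • gradient h x))
  rw [← sub_eq_add_neg, inner_neg_right, real_inner_smul_right, real_inner_self_eq_norm_sq,
    norm_neg, norm_smul, Real.norm_of_nonneg (by positivity)] at hdesc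
  have hLβ' : L * (1 / β) ≤ 1 := by rwa [mul_one_div, div_le_one hβ]
  have := mul_le_mul_of_nonneg_left hdesc (by positivity : (0 : ℝ) ≤ 2 * β)
  field_simp at this
  nlinarith [mul_le_mul_of_nonneg_right hLβ' (sq_nonneg ‖gradient h x‖)]

end LipschitzGradient

section Telescoping

variable {b f : ℕ → ℝ} {k₁ : ℕ}

theorem sq_le_sq_add_two_mul_sub_of_sq_sub_sq_le (hb : Monotone b) (hb_pos : 0 < b k₁)
    (hstep : ∀ k, k₁ ≤ k → b (k + 1) ^ 2 - b k ^ 2 ≤ 2 * b (k + 1) * (f k - f (k + 1)))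
    {K : ℕ} (hK : k₁ ≤ K) :
    b K ^ 2 ≤ b k₁ ^ 2 + 2 * b K * (f k₁ - f K) := by
  have hf : AntitoneOn f (Set.Ici k₁) := by
    refine antitoneOn_nat_Ici_of_succ_le fun k hk ↦ ?_
    have hbk : b k₁ ≤ b k := hb hk
    have hbk' : b k ≤ b (k + 1) := hb k.le_succ
    nlinarith [hstep k hk]
  induction K, hK using Nat.le_induction with
  | base => simp
  | succ K hK ih =>
    have hfK : f K ≤ f k₁ := hf (Set.mem_Ici.2 le_rfl) (Set.mem_Ici.2 hK) hK
    have hbK : b K ≤ b (K + 1) := hb K.le_succ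
    nlinarith [hstep K hK]

theorem le_add_two_mul_sub_of_sq_sub_sq_le {m : ℝ} (hb : Monotone b) (hb_pos : 0 < b k₁)
    (hstep : ∀ k, k₁ ≤ k → b (k + 1) ^ 2 - b k ^ 2 ≤ 2 * b (k + 1) * (f k - f (k + 1)))
    (hm : ∀ k, m ≤ f k) {K : ℕ} (hK : k₁ ≤ K) :
    b K ≤ b k₁ + 2 * (f k₁ - m) := by
  have hsq := sq_le_sq_add_two_mul_sub_of_sq_sub_sq_le hb hb_pos hstep hK
  have hbK : b k₁ ≤ b K := hb hK
  nlinarith [hm K]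

end Telescoping

/-- upper bound on AdaGrad-Norm step sizes after the switch index.
For AdaGrad-Norm iterates of `h` with `L`-Lipschitz gradient bounded below by `h*`,
if `b_{k+1} ≥ L` for all `k ≥ k₁`, then for every `K > k₁`,
`b_K ≤ b_{k₁} + 2(h(x^{k₁}) − h*)`. -/
theorem adagrad_stepsize_upper_bound
    {n : ℕ} (h : EuclideanSpace ℝ (Fin n) → ℝ) (hdiff : Differentiable ℝ h)
    (L hstar : ℝ)
    (hLip : ∀ u v, ‖gradient h u - gradient h v‖ ≤ L * ‖u - v‖)
    (hlow : ∀ x, hstar ≤ h x)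
    (b₀ : ℝ) (hb₀ : 0 < b₀)
    (x : ℕ → EuclideanSpace ℝ (Fin n)) (b : ℕ → ℝ)
    (hb0 : b 0 = b₀)
    (hb : ∀ k : ℕ, b (k + 1) = Real.sqrt (b k ^ 2 + ‖gradient h (x k)‖ ^ 2))
    (hx : ∀ k : ℕ, x (k + 1) = x k - (1 / b (k + 1)) • gradient h (x k))
    (k₁ : ℕ) (hk₁ : ∀ k, k₁ ≤ k → L ≤ b (k + 1)) :
    ∀ K : ℕ, k₁ < K → b K ≤ b k₁ + 2 * (h (x k₁) - hstar) := by
  have hb_pos : ∀ k, 0 < b k := by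
    intro k
    induction k with
    | zero => rwa [hb0]
    | succ k ih => rw [hb k]; exact Real.sqrt_pos.2 (by positivity)
  have hb_sq : ∀ k, b (k + 1) ^ 2 = b k ^ 2 + ‖gradient h (x k)‖ ^ 2 := fun k ↦ by
    rw [hb k, Real.sq_sqrt (by positivity)]
  have hb_mono : Monotone b := monotone_nat_of_le_succ fun k ↦ by
    rw [hb k]; exact Real.le_sqrt_of_sq_le (le_add_of_nonneg_right (sq_nonneg _))
  have hstep : ∀ k, k₁ ≤ k →
      b (k + 1) ^ 2 - b k ^ 2 ≤ 2 * b (k + 1) * (h (x k) - h (x (k + 1))) := fun k hk ↦ by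
    rw [hb_sq k, add_sub_cancel_left, hx k]
    exact sq_norm_gradient_le_of_lipschitz_gradient hdiff hLip (hb_pos (k + 1)) (hk₁ k hk) (x k)
  exact fun K hK ↦ le_add_two_mul_sub_of_sq_sub_sq_le hb_mono (hb_pos k₁) hstep
    (fun k ↦ hlow (x k)) hK.le
end
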